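/- arXiv:1907.06680 — 2 statements merged into one kernel-verified Lean document; each statement's English description precedes it below -/
import Mathlib

section
/- Let I be an ideal of Di[X] and S a monic subset of I such that for every nonzero f ∈ I there is a normal S-polynomial whose leading monomial equals f̄. Then I = Id(S) and S is a Gröbner–Shirshov basis for I. -/
namespace CDi

/-- A "diword": a basis element of the free commutative disemigroup `⌊X⁺⌋₁ ∪ ⌊XX⌋₂`:
a nonempty multiset (commutative word) together with a label `1`, or label `2`
when the word has length `2`. -/
def DiWord (X : Type*) :=
  {p : Multiset X × ℕ // p.1 ≠ 0 ∧ (p.2 = 1 ∨ (p.2 = 2 ∧ Multiset.card p.1 = 2))}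

namespace DiWord

variable {X : Type*}

def word (a : DiWord X) : Multiset X := a.1.1

def lbl (a : DiWord X) : ℕ := a.1.2

theorem word_ne (a : DiWord X) : a.word ≠ 0 := a.2.1

theorem add_word_ne (a b : DiWord X) : a.word + b.word ≠ 0 := by
  intro h
  have h1 := congrArg Multiset.card h
  simp only [Multiset.card_add, Multiset.card_zero] at h1
  have := a.word_ne
  rw [← Multiset.card_pos] at this
  omega

/-- The operation `⊣` on `Disgp[X]`: always produces label 1. -/
def pd (a b : DiWord X) : DiWord X :=
  ⟨(a.word + b.word, 1), add_word_ne a b, Or.inl rfl⟩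

/-- The operation `⊢` on `Disgp[X]`: produces label 2 exactly when both factors are
single letters (total length 2), label 1 otherwise. -/
def pv (a b : DiWord X) : DiWord X :=
  ⟨(a.word + b.word, if Multiset.card (a.word + b.word) = 2 then 2 else 1), by
    refine ⟨add_word_ne a b, ?_⟩
    split_ifs with h
    · exact Or.inr ⟨rfl, h⟩
    · exact Or.inl rfl⟩

/-- `⌊u⌋₁` for a nonempty commutative word `u`. -/
def m1 (u : Multiset X) (h : u ≠ 0) : DiWord X := ⟨(u, 1), h, Or.inl rfl⟩

/-- A single letter `x ∈ X`, i.e. `⌊x⌋₁`. -/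
def mX (x : X) : DiWord X := m1 {x} (by simp)

/-- `⌊xx'⌋₂`. -/
def m2 (x y : X) : DiWord X := ⟨({x, y}, 2), by simp, Or.inr ⟨rfl, by simp⟩⟩

end DiWord
/-- A monomial ordering on the free commutative semigroup `⌊X⁺⌋` (nonempty multisets
over `X`): a well-ordering compatible with multiplication. -/
structure MonOrd (X : Type*) where
  lt : Multiset X → Multiset X → Prop
  wf : WellFounded fun a b : {u : Multiset X // u ≠ 0} => lt a.1 b.1
  trans : ∀ u v w : Multiset X, u ≠ 0 → v ≠ 0 → w ≠ 0 → lt u v → lt v w → lt u w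
  total : ∀ u v : Multiset X, u ≠ 0 → v ≠ 0 → u ≠ v → lt u v ∨ lt v u
  compat : ∀ u v w : Multiset X, u ≠ 0 → v ≠ 0 → lt u v → lt (u + w) (v + w)

/-- The monomial-center ordering on `⌊X⁺⌋₁ ∪ ⌊XX⌋₂` induced by a monomial ordering:
compare the words first, then the labels. -/
def MonOrd.dlt {X : Type*} (o : MonOrd X) (a b : DiWord X) : Prop :=
  o.lt a.word b.word ∨ (a.word = b.word ∧ a.lbl < b.lbl)

def MonOrd.dle {X : Type*} (o : MonOrd X) (a b : DiWord X) : Prop :=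
  a = b ∨ o.dlt a b

variable {X k : Type*} [Ring k]

/-- The free commutative dialgebra `Di[X]` (polynomial diring over `k`): the free
`k`-module on the diwords. -/
abbrev Di (X k : Type*) [Ring k] := DiWord X →₀ k

/-- The basis diword `m` viewed as an element of `Di[X]`. -/
noncomputable def mono (m : DiWord X) : Di X k := Finsupp.single m 1

/-- The operation `⊣` on `Di[X]`, extended bilinearly. -/
noncomputable def pL (f g : Di X k) : Di X k :=
  f.sum fun u a => g.sum fun v b => Finsupp.single (DiWord.pd u v) (a * b)

/-- The operation `⊢` on `Di[X]`, extended bilinearly. -/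
noncomputable def pR (f g : Di X k) : Di X k :=
  f.sum fun u a => g.sum fun v b => Finsupp.single (DiWord.pv u v) (a * b)

/-- `m` is the leading monomial of `f` (w.r.t. the monomial-center ordering `o`). -/
def IsLM (o : MonOrd X) (f : Di X k) (m : DiWord X) : Prop :=
  m ∈ f.support ∧ ∀ u ∈ f.support, u ≠ m → o.dlt u m

/-- `f` is strong: the associative word of its leading monomial is strictly greater than
the associative word of every other monomial in its support (equivalently `f̃ > r̃_f`). -/
def IsStrong (o : MonOrd X) (f : Di X k) : Prop :=
  ∃ m, IsLM o f m ∧ ∀ u ∈ f.support, u ≠ m → o.lt u.word m.word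

/-- Normal `S`-polynomials: `s`, `s ⊢ x` (when `|s̃| = 1`), or `s ⊣ ⌊a⌋₁` (when `s` is strong). -/
def IsNormal (o : MonOrd X) (S : Set (Di X k)) (g : Di X k) : Prop :=
  g ∈ S ∨
    (∃ s ∈ S, ∃ x : X, (∃ m, IsLM o s m ∧ Multiset.card m.word = 1) ∧
      g = pR s (mono (DiWord.mX x))) ∨
    (∃ s ∈ S, ∃ a : Multiset X, ∃ ha : a ≠ 0, IsStrong o s ∧
      g = pL s (mono (DiWord.m1 a ha)))

/-- `m ∈ Irr(S)`: `m` is not the leading monomial of any normal `S`-polynomial. -/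
def Irr (o : MonOrd X) (S : Set (Di X k)) (m : DiWord X) : Prop :=
  ∀ g : Di X k, IsNormal o S g → ¬ IsLM o g m

/-- Every element of `S` is monic. -/
def MonicSet (o : MonOrd X) (S : Set (Di X k)) : Prop :=
  ∀ s ∈ S, ∃ m, IsLM o s m ∧ s m = 1

/-- `h` is trivial modulo `S`: `h` is a linear combination of normal `S`-polynomials whose
leading monomials are `≤` the leading monomial of `h`. -/
def TrivialMod (o : MonOrd X) (S : Set (Di X k)) (h : Di X k) : Prop :=
  ∃ (n : ℕ) (α : Fin n → k) (g : Fin n → Di X k),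
    (∀ i, IsNormal o S (g i)) ∧ h = ∑ i, α i • g i ∧
    ∀ i, α i ≠ 0 → ∀ mi mh, IsLM o (g i) mi → IsLM o h mh → o.dle mi mh

/-- The compositions of elements of a (monic) set `S`: multiplication, special, equal,
short intersection, equal multiplication and long intersection compositions. -/
def IsComp (o : MonOrd X) (S : Set (Di X k)) (h : Di X k) : Prop :=
  -- multiplication composition
  (∃ f ∈ S, ¬ IsStrong o f ∧ ∃ x : X,
      h = pR f (mono (DiWord.mX x)) ∨ h = pL f (mono (DiWord.mX x))) ∨
  -- special composition
  (∃ f ∈ S, IsStrong o f ∧ (∃ m, IsLM o f m ∧ 1 < Multiset.card m.word) ∧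
      (∃ u ∈ f.support, ∃ x : X, u = DiWord.mX x) ∧
      ∃ x : X, h = pR f (mono (DiWord.mX x)) - pL f (mono (DiWord.mX x))) ∨
  -- equal composition
  (∃ f ∈ S, ∃ g ∈ S, f ≠ g ∧ (∃ m, IsLM o f m ∧ IsLM o g m) ∧ h = f - g) ∨
  -- short intersection composition
  (∃ f ∈ S, ∃ g ∈ S, (∃ mf, IsLM o f mf ∧ Multiset.card mf.word = 2) ∧
      (∃ mg, IsLM o g mg ∧ Multiset.card mg.word = 1) ∧
      ∃ x : X, ∃ gx : Di X k,
        (gx = pR g (mono (DiWord.mX x)) ∨ (IsStrong o g ∧ gx = pL g (mono (DiWord.mX x)))) ∧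
        (∃ m, IsLM o f m ∧ IsLM o gx m) ∧ h = f - gx) ∨
  -- equal multiplication composition
  (∃ f ∈ S, ∃ g ∈ S, IsStrong o f ∧ IsStrong o g ∧
      ∃ mf mg, IsLM o f mf ∧ IsLM o g mg ∧
        3 < Multiset.card mf.word + Multiset.card mg.word ∧
        mf ≠ mg ∧ mf.word = mg.word ∧
        ∃ x : X, h = pL f (mono (DiWord.mX x)) - pL g (mono (DiWord.mX x))) ∨
  -- long intersection composition
  (∃ f ∈ S, ∃ g ∈ S, IsStrong o f ∧ IsStrong o g ∧
      ∃ mf mg, IsLM o f mf ∧ IsLM o g mg ∧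
        3 < Multiset.card mf.word + Multiset.card mg.word ∧
        mf ≠ mg ∧ mf.word ≠ mg.word ∧
        ∃ w a b : Multiset X,
          mf.word ≤ w ∧ mg.word ≤ w ∧ (∀ w', mf.word ≤ w' → mg.word ≤ w' → w ≤ w') ∧
          mf.word + a = w ∧ mg.word + b = w ∧
          Multiset.card w < Multiset.card mf.word + Multiset.card mg.word ∧
          ∃ hb : b ≠ 0,
            ((a = 0 ∧ h = f - pL g (mono (DiWord.m1 b hb))) ∨
              (∃ ha : a ≠ 0,
                h = pL f (mono (DiWord.m1 a ha)) - pL g (mono (DiWord.m1 b hb)))))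

/-- `S` is a Gröbner–Shirshov basis: `S` is monic and every composition is trivial mod `S`. -/
def IsGSB (o : MonOrd X) (S : Set (Di X k)) : Prop :=
  MonicSet o S ∧ ∀ h, IsComp o S h → TrivialMod o S h

/-- Membership in the (two-sided) ideal `Id(S)` of `Di[X]` generated by `S`. -/
inductive InIdeal (S : Set (Di X k)) : Di X k → Prop
  | mem {f} : f ∈ S → InIdeal S f
  | zero : InIdeal S 0
  | add {f g} : InIdeal S f → InIdeal S g → InIdeal S (f + g)
  | smul (c : k) {f} : InIdeal S f → InIdeal S (c • f)
  | pL_left (f) {g} : InIdeal S g → InIdeal S (pL f g)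
  | pL_right (f) {g} : InIdeal S g → InIdeal S (pL g f)
  | pR_left (f) {g} : InIdeal S g → InIdeal S (pR f g)
  | pR_right (f) {g} : InIdeal S g → InIdeal S (pR g f)

/-- `I` is an ideal of `Di[X]`. -/
def IsIdeal (I : Set (Di X k)) : Prop :=
  (0 : Di X k) ∈ I ∧ (∀ f g, f ∈ I → g ∈ I → f + g ∈ I) ∧
    (∀ (c : k) f, f ∈ I → c • f ∈ I) ∧
    ∀ f g, g ∈ I → pL f g ∈ I ∧ pL g f ∈ I ∧ pR f g ∈ I ∧ pR g f ∈ I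

/-- `Id(S)` as a `k`-submodule of `Di[X]`. -/
def idealSub (S : Set (Di X k)) : Submodule k (Di X k) where
  carrier := {f | InIdeal S f}
  add_mem' := fun hf hg => InIdeal.add hf hg
  zero_mem' := InIdeal.zero
  smul_mem' := fun c _ hf => InIdeal.smul c hf



section Aux

variable {X k : Type*} [Ring k]

private theorem wf_irrefl {α : Sort*} {r : α → α → Prop} (h : WellFounded r) (a : α) :
    ¬ r a a := by
  induction a using h.induction with
  | _ a ih => exact fun hr => ih a hr hr

theorem MonOrd.lt_irrefl' (o : MonOrd X) {u : Multiset X} (hu : u ≠ 0) : ¬ o.lt u u :=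
  fun h => wf_irrefl o.wf (⟨u, hu⟩ : {u : Multiset X // u ≠ 0}) h

theorem MonOrd.dlt_trans (o : MonOrd X) {a b c : DiWord X}
    (h1 : o.dlt a b) (h2 : o.dlt b c) : o.dlt a c := by
  rcases h1 with h1 | ⟨h1, h1'⟩ <;> rcases h2 with h2 | ⟨h2, h2'⟩
  · exact Or.inl (o.trans _ _ _ a.word_ne b.word_ne c.word_ne h1 h2)
  · exact Or.inl (h2 ▸ h1)
  · exact Or.inl (h1 ▸ h2)
  · exact Or.inr ⟨h1.trans h2, h1'.trans h2'⟩

theorem MonOrd.dlt_asym (o : MonOrd X) {a b : DiWord X}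
    (h1 : o.dlt a b) (h2 : o.dlt b a) : False := by
  have := o.dlt_trans h1 h2
  rcases this with h | ⟨_, h⟩
  · exact o.lt_irrefl' a.word_ne h
  · omega

theorem MonOrd.dlt_wf (o : MonOrd X) : WellFounded (o.dlt (X := X)) := by
  have h3 : WellFounded (Prod.Lex (fun a b : {u : Multiset X // u ≠ 0} => o.lt a.1 b.1)
      ((· < ·) : ℕ → ℕ → Prop)) := WellFounded.prod_lex o.wf wellFounded_lt
  have hsub : ∀ a b : DiWord X, o.dlt a b →
      Prod.Lex (fun a b : {u : Multiset X // u ≠ 0} => o.lt a.1 b.1) ((· < ·) : ℕ → ℕ → Prop)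
        (⟨a.word, a.word_ne⟩, a.lbl) (⟨b.word, b.word_ne⟩, b.lbl) := by
    intro a b h
    rcases h with h | ⟨hw, hl⟩
    · exact Prod.Lex.left _ _ h
    · have he : (⟨a.word, a.word_ne⟩ : {u : Multiset X // u ≠ 0}) = ⟨b.word, b.word_ne⟩ :=
        Subtype.ext hw
      rw [he]
      exact Prod.Lex.right _ hl
  exact Subrelation.wf (fun {a b} h => hsub a b h)
    (InvImage.wf (fun a : DiWord X => ((⟨a.word, a.word_ne⟩, a.lbl) :
      {u : Multiset X // u ≠ 0} × ℕ)) h3)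

theorem lm_unique (o : MonOrd X) {f : Di X k} {m₁ m₂ : DiWord X}
    (h1 : IsLM o f m₁) (h2 : IsLM o f m₂) : m₁ = m₂ := by
  by_contra hne
  exact o.dlt_asym (h2.2 m₁ h1.1 hne) (h1.2 m₂ h2.1 (Ne.symm hne))

theorem InIdeal.sub {S : Set (Di X k)} {f g : Di X k}
    (hf : InIdeal S f) (hg : InIdeal S g) : InIdeal S (f - g) := by
  rw [sub_eq_add_neg, ← neg_one_smul k g]
  exact hf.add (hg.smul _)

theorem normal_inideal (o : MonOrd X) {S : Set (Di X k)} {g : Di X k}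
    (h : IsNormal o S g) : InIdeal S g := by
  rcases h with h | ⟨s, hs, x, _, rfl⟩ | ⟨s, hs, a, ha, _, rfl⟩
  · exact .mem h
  · exact .pR_right _ (.mem hs)
  · exact .pL_right _ (.mem hs)

theorem comp_inideal (o : MonOrd X) {S : Set (Di X k)} {h : Di X k}
    (hc : IsComp o S h) : InIdeal S h := by
  rcases hc with ⟨f, hf, _, x, rfl | rfl⟩ | ⟨f, hf, _, _, _, x, rfl⟩ |
    ⟨f, hf, g, hg, _, _, rfl⟩ | ⟨f, hf, g, hg, _, _, x, gx, hgx, _, rfl⟩ |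
    ⟨f, hf, g, hg, _, _, mf, mg, _, _, _, _, _, x, rfl⟩ |
    ⟨f, hf, g, hg, _, _, mf, mg, _, _, _, _, _, w, a, b, _, _, _, _, _, _, hb, hcase⟩
  · exact .pR_right _ (.mem hf)
  · exact .pL_right _ (.mem hf)
  · exact .sub (.pR_right _ (.mem hf)) (.pL_right _ (.mem hf))
  · exact .sub (.mem hf) (.mem hg)
  · rcases hgx with rfl | ⟨_, rfl⟩
    · exact .sub (.mem hf) (.pR_right _ (.mem hg))
    · exact .sub (.mem hf) (.pL_right _ (.mem hg))
  · exact .sub (.pL_right _ (.mem hf)) (.pL_right _ (.mem hg))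
  · rcases hcase with ⟨_, rfl⟩ | ⟨ha, rfl⟩
    · exact .sub (.mem hf) (.pL_right _ (.mem hg))
    · exact .sub (.pL_right _ (.mem hf)) (.pL_right _ (.mem hg))

theorem inideal_mem {I S : Set (Di X k)} (hI : IsIdeal I) (hSI : S ⊆ I) :
    ∀ f, InIdeal S f → f ∈ I := by
  intro f h
  induction h with
  | mem h => exact hSI h
  | zero => exact hI.1
  | add _ _ ih1 ih2 => exact hI.2.1 _ _ ih1 ih2
  | smul c _ ih => exact hI.2.2.1 c _ ih
  | pL_left f _ ih => exact (hI.2.2.2 f _ ih).1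
  | pL_right f _ ih => exact (hI.2.2.2 f _ ih).2.1
  | pR_left f _ ih => exact (hI.2.2.2 f _ ih).2.2.1
  | pR_right f _ ih => exact (hI.2.2.2 f _ ih).2.2.2

theorem trivial_zero (o : MonOrd X) (S : Set (Di X k)) : TrivialMod o S 0 :=
  ⟨0, Fin.elim0, Fin.elim0, fun i => i.elim0, by simp, fun i => i.elim0⟩

end Aux

theorem trivial_of_mem {Y K : Type*} [Field K] (o : MonOrd Y)
    (I S : Set (Di Y K)) (hI : IsIdeal I) (hSI : S ⊆ I)
    (hlm : ∀ f ∈ I, f ≠ 0 → ∃ g m, IsNormal o S g ∧ IsLM o g m ∧ IsLM o f m) :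
    ∀ f ∈ I, TrivialMod o S f := by
  have key : ∀ m : DiWord Y, ∀ f ∈ I, IsLM o f m → TrivialMod o S f := by
    intro m
    induction m using o.dlt_wf.induction with
    | _ m ih =>
      intro f hfI hfm
      have hf0 : f ≠ 0 := by
        intro h
        have := Finsupp.mem_support_iff.mp hfm.1
        simp [h] at this
      obtain ⟨g, m'', hgnorm, hgm', hfm'⟩ := hlm f hfI hf0
      have hmm : m'' = m := lm_unique o hfm' hfm
      rw [hmm] at hgm' hfm'
      have hgI : g ∈ I := inideal_mem hI hSI g (normal_inideal o hgnorm)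
      have hgm0 : g m ≠ 0 := Finsupp.mem_support_iff.mp hgm'.1
      set c : K := f m / g m with hc_def
      set f₂ : Di Y K := f - c • g with hf₂_def
      have hc : c * g m = f m := div_mul_cancel₀ _ hgm0
      have hf2app : ∀ u, f₂ u = f u - c * g u := by
        intro u
        simp [hf₂_def, Finsupp.sub_apply, Finsupp.smul_apply, smul_eq_mul]
      have hf2m : f₂ m = 0 := by rw [hf2app, hc, sub_self]
      have hsup : ∀ u ∈ f₂.support, o.dlt u m := by
        intro u hu
        have hu' : f₂ u ≠ 0 := Finsupp.mem_support_iff.mp hu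
        have hum : u ≠ m := fun h => hu' (h ▸ hf2m)
        have hor : f u ≠ 0 ∨ g u ≠ 0 := by
          by_contra hcon
          push_neg at hcon
          rw [hf2app, hcon.1, hcon.2, mul_zero, sub_zero] at hu'
          exact hu' rfl
        rcases hor with h | h
        · exact hfm.2 u (Finsupp.mem_support_iff.mpr h) hum
        · exact hgm'.2 u (Finsupp.mem_support_iff.mpr h) hum
      have hf2I : f₂ ∈ I := by
        have h1 : (-c) • g ∈ I := hI.2.2.1 (-c) g hgI
        have := hI.2.1 f ((-c) • g) hfI h1
        rwa [neg_smul, ← sub_eq_add_neg] at this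
      have hfeq : f = c • g + f₂ := by rw [hf₂_def]; abel
      by_cases h2 : f₂ = 0
      · refine ⟨1, fun _ => c, fun _ => g, fun _ => hgnorm, ?_, ?_⟩
        · rw [hfeq, h2, add_zero, Fin.sum_univ_one]
        · intro i _ mi mh hmi hmh
          rw [lm_unique o hmi hgm', lm_unique o hmh hfm]
          exact Or.inl rfl
      · obtain ⟨g₂, m₂, _, _, hf₂m⟩ := hlm f₂ hf2I h2
        have hm₂ : o.dlt m₂ m := hsup m₂ hf₂m.1
        obtain ⟨n, α, gs, hnorm, heq, hle⟩ := ih m₂ hm₂ f₂ hf2I hf₂m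
        refine ⟨n + 1, Fin.cons c α, Fin.cons g gs, ?_, ?_, ?_⟩
        · intro i
          refine Fin.cases ?_ ?_ i
          · exact hgnorm
          · exact fun j => hnorm j
        · rw [Fin.sum_univ_succ]
          simp only [Fin.cons_zero, Fin.cons_succ]
          rw [← heq]
          exact hfeq
        · intro i
          refine Fin.cases ?_ ?_ i
          · intro _ mi mh hmi hmh
            rw [lm_unique o hmi hgm', lm_unique o hmh hfm]
            exact Or.inl rfl
          · intro j hj mi mh hmi hmh
            rw [lm_unique o hmh hfm]
            have hd : o.dle mi m₂ := hle j (by simpa using hj) mi m₂ hmi hf₂m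
            rcases hd with rfl | hd
            · exact Or.inr hm₂
            · exact Or.inr (o.dlt_trans hd hm₂)
  intro f hfI
  by_cases hf0 : f = 0
  · rw [hf0]; exact trivial_zero o S
  · obtain ⟨g, m, _, _, hfm⟩ := hlm f hfI hf0
    exact key m f hfI hfm

/-- Let `I` be an ideal of `Di[X]` and `S` a monic subset of `I` such that every
nonzero `f ∈ I` has the same leading monomial as some normal `S`-polynomial. Then
`I = Id(S)` and `S` is a Gröbner–Shirshov basis for `I`. -/
theorem gsb_criterion {Y K : Type*} [Field K] (o : MonOrd Y)
    (I S : Set (Di Y K)) (hI : IsIdeal I) (hSI : S ⊆ I) (hS : MonicSet o S)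
    (hlm : ∀ f ∈ I, f ≠ 0 → ∃ g m, IsNormal o S g ∧ IsLM o g m ∧ IsLM o f m) :
    I = {f | InIdeal S f} ∧ (∀ h, IsComp o S h → TrivialMod o S h) := by
  have htriv := trivial_of_mem o I S hI hSI hlm
  have hmemid : ∀ f ∈ I, InIdeal S f := by
    intro f hf
    obtain ⟨n, α, g, hnorm, heq, -⟩ := htriv f hf
    have : f ∈ idealSub S := by
      rw [heq]
      exact Submodule.sum_mem _ fun i _ =>
        Submodule.smul_mem _ _ (normal_inideal o (hnorm i))
    exact this
  constructor
  · ext f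
    exact ⟨fun hf => hmemid f hf, fun hf => inideal_mem hI hSI f hf⟩
  · intro h hc
    exact htriv h (inideal_mem hI hSI h (comp_inideal o hc))

end CDi
end

section
/- If X is a finite set and R is a left Noetherian associative ring with unit, then the polynomial diring Di_R[X] is left Noetherian: every ascending chain of left ideals of Di_R[X] stabilizes. -/
open Filter in
theorem exists_forall_eq_of_monotone₂ {α : Type*} [PartialOrder α] [WellFoundedGT α]
    (f : ℕ → ℕ → α) (hf : Monotone fun p : ℕ × ℕ => f p.1 p.2) :
    ∃ K, ∀ k ≥ K, ∀ n, f k n = f K n := by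
  obtain ⟨K₀, hK₀⟩ := WellFoundedGT.monotone_chain_condition
    ⟨fun k => f k k, fun a b h => hf (Prod.mk_le_mk.2 ⟨h, h⟩)⟩
  -- The stable diagonal value bounds every entry beyond it; the finitely many columns below it
  -- stabilize separately.
  have hlarge : ∀ k n, K₀ ≤ k → K₀ ≤ n → f k n = f K₀ K₀ := fun k n hk hn =>
    le_antisymm
      ((hf (Prod.mk_le_mk.2 ⟨le_max_left k n, le_max_right k n⟩)).trans_eq
        (hK₀ _ (hk.trans (le_max_left k n))).symm)
      (hf (Prod.mk_le_mk.2 ⟨hk, hn⟩))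
  have hcol : ∀ n, ∃ a, ∀ᶠ k in atTop, f k n = a := fun n => by
    obtain ⟨K, hK⟩ := WellFoundedGT.monotone_chain_condition
      ⟨fun k => f k n, fun a b h => hf (Prod.mk_le_mk.2 ⟨h, le_rfl⟩)⟩
    exact ⟨f K n, eventually_atTop.2 ⟨K, fun k hk => (hK k hk).symm⟩⟩
  choose c hc using hcol
  have hsmall : ∀ᶠ k in atTop, ∀ n ∈ {n | n < K₀}, f k n = c n :=
    (eventually_all_finite (Set.finite_lt_nat K₀)).2 fun n _ => hc n
  obtain ⟨K, hK⟩ := (hsmall.and (eventually_ge_atTop K₀)).exists_forall_of_atTop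
  refine ⟨K, fun k hk n => ?_⟩
  rcases lt_or_ge n K₀ with hn | hn
  · rw [(hK k hk).1 n hn, (hK K le_rfl).1 n hn]
  · rw [hlarge k n (hK k hk).2 hn, hlarge K n (hK K le_rfl).2 hn]

namespace Ideal

open Polynomial

variable {R : Type*} [Ring R]

theorem mem_leadingCoeffNth_iff_exists_coeff {I : Ideal R[X]} {n : ℕ} {r : R} :
    r ∈ I.leadingCoeffNth n ↔ ∃ p ∈ I, p.degree ≤ n ∧ p.coeff n = r := by
  simp [leadingCoeffNth, degreeLE, mem_degreeLE, mem_ofPolynomial, and_comm, and_left_comm]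

theorem leadingCoeffNth_mono_left {I J : Ideal R[X]} (h : I ≤ J) (n : ℕ) :
    I.leadingCoeffNth n ≤ J.leadingCoeffNth n :=
  Submodule.map_mono (inf_le_inf_left _ h)

theorem leadingCoeffNth_mono_right (I : Ideal R[X]) {m n : ℕ} (h : m ≤ n) :
    I.leadingCoeffNth m ≤ I.leadingCoeffNth n := by
  intro r hr
  obtain ⟨p, hpI, hpdeg, rfl⟩ := mem_leadingCoeffNth_iff_exists_coeff.1 hr
  refine mem_leadingCoeffNth_iff_exists_coeff.2
    ⟨p * X ^ (n - m), X_pow_mul (p := p) ▸ I.mul_mem_left _ hpI, ?_, ?_⟩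
  · grw [degree_mul_le, hpdeg, degree_X_pow_le, ← Nat.cast_add, Nat.add_sub_cancel' h]
  · rw [← coeff_mul_X_pow p (n - m) m, Nat.add_sub_cancel' h]

/-- Induction on the degree: a `q ∈ I` with the same `n`-th coefficient as `p ∈ J` lowers the
degree of `p - q ∈ J`. -/
theorem le_of_le_of_leadingCoeffNth_le {I J : Ideal R[X]} (hIJ : I ≤ J)
    (h : ∀ n, J.leadingCoeffNth n ≤ I.leadingCoeffNth n) : J ≤ I := by
  suffices ∀ n : ℕ, ∀ p ∈ J, p.degree < n → p ∈ I from
    fun p hp => this _ p hp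
      (degree_le_natDegree.trans_lt (WithBot.coe_lt_coe.2 p.natDegree.lt_succ_self))
  intro n
  induction n with
  | zero =>
    intro p _ hp
    rw [Nat.cast_zero, Nat.WithBot.lt_zero_iff, degree_eq_bot] at hp
    exact hp ▸ I.zero_mem
  | succ n ih =>
    intro p hpJ hpdeg
    obtain ⟨q, hqI, hqdeg, hq⟩ := mem_leadingCoeffNth_iff_exists_coeff.1
      (h n (mem_leadingCoeffNth_iff_exists_coeff.2 ⟨p, hpJ, Order.le_of_lt_succ hpdeg, rfl⟩))
    have hlt : (p - q).degree < n := by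
      rw [degree_lt_iff_coeff_zero]
      intro m hm
      rcases hm.eq_or_lt with rfl | hm
      · rw [coeff_sub, hq, sub_self]
      · rw [coeff_sub, coeff_eq_zero_of_degree_lt (hqdeg.trans_lt (WithBot.coe_lt_coe.2 hm)),
          coeff_eq_zero_of_degree_lt (hpdeg.trans_le (WithBot.coe_le_coe.2 hm)), sub_zero]
    simpa using I.add_mem (ih _ (J.sub_mem hpJ (hIJ hqI)) hlt) hqI

end Ideal

namespace Polynomial

variable {R : Type*} [Ring R]

theorem isNoetherianRing_of_ring [IsNoetherianRing R] : IsNoetherianRing R[X] := by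
  refine monotone_stabilizes_iff_noetherian.1 fun I => ?_
  obtain ⟨K, hK⟩ := exists_forall_eq_of_monotone₂ (fun k n => Ideal.leadingCoeffNth (I k) n)
    fun p q h => (Ideal.leadingCoeffNth_mono_left (I.monotone h.1) _).trans
      (Ideal.leadingCoeffNth_mono_right (I q.1) h.2)
  exact ⟨K, fun k hk => le_antisymm (I.monotone hk)
    (Ideal.le_of_le_of_leadingCoeffNth_le (I.monotone hk) fun n => (hK k hk n).le)⟩

end Polynomial

namespace AddMonoidAlgebra

variable {R : Type*} [Ring R]

theorem isNoetherianRing_of_addEquiv {M N : Type*} [AddMonoid M] [AddMonoid N] (e : M ≃+ N)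
    [IsNoetherianRing (AddMonoidAlgebra R M)] : IsNoetherianRing (AddMonoidAlgebra R N) :=
  isNoetherianRing_of_ringEquiv _ (mapDomainRingEquiv R e)

theorem isNoetherianRing_nat_prod {M : Type*} [AddMonoid M]
    [IsNoetherianRing (AddMonoidAlgebra R M)] : IsNoetherianRing (AddMonoidAlgebra R (ℕ × M)) :=
  haveI := Polynomial.isNoetherianRing_of_ring (R := AddMonoidAlgebra R M)
  isNoetherianRing_of_ringEquiv _
    ((Polynomial.toFinsuppIso _).trans curryRingEquiv.symm)

theorem isNoetherianRing_pi_nat (σ : Type*) [Finite σ] [IsNoetherianRing R] :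
    IsNoetherianRing (AddMonoidAlgebra R (σ → ℕ)) := by
  induction σ using Finite.induction_empty_option with
  | of_equiv e ih =>
    exact isNoetherianRing_of_addEquiv (LinearEquiv.funCongrLeft ℕ ℕ e.symm).toAddEquiv
  | h_empty => exact isNoetherianRing_of_ringEquiv _ (uniqueRingEquiv _).symm
  | @h_option τ _ ih =>
    have := isNoetherianRing_nat_prod (R := R) (M := τ → ℕ)
    exact isNoetherianRing_of_addEquiv
      (RingEquiv.piOptionEquivProd (R := fun _ => ℕ)).toAddEquiv.symm

theorem isNoetherianRing_multiset (σ : Type*) [Finite σ] [IsNoetherianRing R] :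
    IsNoetherianRing (AddMonoidAlgebra R (Multiset σ)) := by
  classical
  have := isNoetherianRing_pi_nat (R := R) σ
  exact isNoetherianRing_of_addEquiv
    ((Finsupp.linearEquivFunOnFinite ℕ ℕ σ).toAddEquiv.symm.trans Multiset.toFinsupp.symm)

end AddMonoidAlgebra

namespace CDi

namespace DiWord

variable {X : Type*}

theorem ext {a b : DiWord X} (hw : a.word = b.word) (hl : a.lbl = b.lbl) : a = b :=
  Subtype.ext (Prod.ext hw hl)

open scoped Classical in
/-- `shift u d = ⌊u⌋₁ ⊣ d`, extended by `shift 0 = id` so that it is an action of the monoid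
`Multiset X`. -/
noncomputable def shift (u : Multiset X) (d : DiWord X) : DiWord X :=
  if h : u = 0 then d else pd (m1 u h) d

@[simp]
theorem shift_zero : shift (0 : Multiset X) = id :=
  funext fun _ => dif_pos rfl

theorem shift_of_ne_zero {u : Multiset X} (hu : u ≠ 0) (d : DiWord X) :
    shift u d = pd (m1 u hu) d :=
  dif_neg hu

theorem word_shift (u : Multiset X) (d : DiWord X) : (shift u d).word = u + d.word := by
  rcases eq_or_ne u 0 with rfl | hu
  · simp
  · rw [shift_of_ne_zero hu]; rfl

theorem lbl_shift_of_lbl_eq_one (u : Multiset X) {d : DiWord X} (hd : d.lbl = 1) :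
    (shift u d).lbl = 1 := by
  rcases eq_or_ne u 0 with rfl | hu
  · simpa
  · rw [shift_of_ne_zero hu]; rfl

theorem shift_add (u v : Multiset X) : shift (u + v) = shift u ∘ shift v := by
  funext d
  rcases eq_or_ne u 0 with rfl | hu
  · simp
  rcases eq_or_ne v 0 with rfl | hv
  · simp
  rw [Function.comp_apply, shift_of_ne_zero hu, shift_of_ne_zero hv,
    shift_of_ne_zero (fun h => hu (add_eq_zero.1 h).1)]
  exact ext (add_assoc u v d.word) rfl

theorem exists_shift_eq (d : DiWord X) :
    ∃ u, ∃ g ∈ Set.range mX ∪ Set.range (Function.uncurry m2), shift u g = d := by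
  classical
  rcases d.2.2 with hl | ⟨hl, hc⟩
  · obtain ⟨x, hx⟩ := Multiset.exists_mem_of_ne_zero d.word_ne
    refine ⟨d.word.erase x, mX x, Or.inl ⟨x, rfl⟩, ext ?_ ?_⟩
    · rw [word_shift, add_comm]
      exact (Multiset.singleton_add _ _).trans (Multiset.cons_erase hx)
    · exact (lbl_shift_of_lbl_eq_one _ rfl).trans hl.symm
  · obtain ⟨x, y, hxy⟩ := Multiset.card_eq_two.1 hc
    exact ⟨0, m2 x y, Or.inr ⟨(x, y), rfl⟩, ext hxy.symm hl.symm⟩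

end DiWord

open DiWord

variable {X R : Type*} [Ring R]

noncomputable def shiftHom : Multiplicative (Multiset X) →* AddMonoid.End (Di X R) where
  toFun u := Finsupp.mapDomain.addMonoidHom (shift u.toAdd)
  map_one' := by
    simp only [toAdd_one, shift_zero, Finsupp.mapDomain.addMonoidHom_id]
    rfl
  map_mul' u v := by
    rw [toAdd_mul, shift_add, Finsupp.mapDomain.addMonoidHom_comp]
    rfl

noncomputable def shiftRingHom : AddMonoidAlgebra R (Multiset X) →+* AddMonoid.End (Di X R) :=
  AddMonoidAlgebra.liftNCRingHom (Module.toAddMonoidEnd R (Di X R)) shiftHom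
    fun r _ => AddMonoidHom.ext fun g => (Finsupp.mapDomain_smul r g).symm

noncomputable instance : Module (AddMonoidAlgebra R (Multiset X)) (Di X R) :=
  Module.compHom _ shiftRingHom

theorem single_smul (u : Multiset X) (r : R) (g : Di X R) :
    AddMonoidAlgebra.single u r • g = r • Finsupp.mapDomain (shift u) g := by
  change AddMonoidAlgebra.liftNC (Module.toAddMonoidEnd R (Di X R) : R →+ _) shiftHom
    (AddMonoidAlgebra.single u r) g = _
  rw [AddMonoidAlgebra.liftNC_single]
  rfl

theorem mapDomain_shift_eq_pL {u : Multiset X} (hu : u ≠ 0) (g : Di X R) :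
    Finsupp.mapDomain (shift u) g = pL (mono (m1 u hu)) g := by
  rw [pL, mono, Finsupp.sum_single_index (by simp), Finsupp.mapDomain]
  simp only [one_mul, shift_of_ne_zero hu]

def ofLeftIdeal (N : Submodule R (Di X R)) (hN : ∀ f g, g ∈ N → pL f g ∈ N) :
    Submodule (AddMonoidAlgebra R (Multiset X)) (Di X R) where
  carrier := N
  add_mem' := N.add_mem
  zero_mem' := N.zero_mem
  smul_mem' s g hg := by
    induction s using AddMonoidAlgebra.induction_linear with
    | zero => rw [zero_smul]; exact N.zero_mem
    | add s t hs ht => rw [add_smul]; exact N.add_mem hs ht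
    | single u r =>
      rw [single_smul]
      refine N.smul_mem r ?_
      rcases eq_or_ne u 0 with rfl | hu
      · simpa using hg
      · exact mapDomain_shift_eq_pL hu g ▸ hN _ _ hg

theorem span_mono_generators :
    Submodule.span (AddMonoidAlgebra R (Multiset X))
      (mono '' (Set.range mX ∪ Set.range (Function.uncurry m2))) =
      (⊤ : Submodule _ (Di X R)) := by
  refine Submodule.eq_top_iff'.2 fun f => ?_
  induction f using Finsupp.induction_linear with
  | zero => exact Submodule.zero_mem _
  | add f g hf hg => exact Submodule.add_mem _ hf hg
  | single d r =>
    obtain ⟨u, g, hg, rfl⟩ := exists_shift_eq d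
    have : Finsupp.single (shift u g) r = AddMonoidAlgebra.single u r • (mono g : Di X R) := by
      rw [single_smul, mono, Finsupp.mapDomain_single, Finsupp.smul_single, smul_eq_mul, mul_one]
    exact this ▸ Submodule.smul_mem _ _ (Submodule.subset_span ⟨g, hg, rfl⟩)

instance [Finite X] : Module.Finite (AddMonoidAlgebra R (Multiset X)) (Di X R) :=
  ⟨Submodule.fg_def.2 ⟨_, ((Set.finite_range _).union (Set.finite_range _)).image _,
    span_mono_generators⟩⟩

/-- If `X` is finite and `R` is a left Noetherian associative ring with unit, then the
polynomial diring `Di_R[X]` is left Noetherian: every ascending chain of left ideals of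
`Di_R[X]` (submodules closed under left multiplication by arbitrary elements via both
operations) stabilizes. -/
theorem diring_left_noetherian {Y R : Type*} [Fintype Y] [Ring R] [IsNoetherianRing R]
    (c : ℕ → Submodule R (Di Y R))
    (hchain : Monotone c)
    (hleft : ∀ (n : ℕ) (f g : Di Y R), g ∈ c n → pL f g ∈ c n ∧ pR f g ∈ c n) :
    ∃ N : ℕ, ∀ m : ℕ, N ≤ m → c m = c N := by
  have := AddMonoidAlgebra.isNoetherianRing_multiset (R := R) Y
  have := isNoetherian_of_isNoetherianRing_of_finite (AddMonoidAlgebra R (Multiset Y)) (Di Y R)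
  obtain ⟨N, hN⟩ := WellFoundedGT.monotone_chain_condition
    ⟨fun n => ofLeftIdeal (c n) fun f g hg => (hleft n f g hg).1, fun _ _ h => hchain h⟩
  exact ⟨N, fun m hm => SetLike.coe_injective (congrArg SetLike.coe (hN m hm)).symm⟩

end CDi
end
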